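/- arXiv:1703.01108 — 3 statements merged into one kernel-verified Lean document; each statement's English description precedes it below -/
import Mathlib

section
/- Let C_* be a normed chain complex over ℝ, let C̄_* be its ℓ¹-completion, and let n ∈ ℕ. Assume that the induced semi-norm on H_n(C_*) is identically zero and that C_* satisfies the uniform boundary condition in degree n with constant K (every null-homologous n-cycle c admits a filling b with ∂b = c and |b| ≤ K·|c|). Then there exists a constant K' ∈ ℝ_{>0} such that every cycle c ∈ C_n admits a chain b ∈ C̄_{n+1} with ∂b = c and |b| ≤ K'·|c|. In particular, the map H_n(C_*) → H_n(C̄_*) induced by the inclusion is zero. -/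
open UniformSpace

/-- **UBC and the ℓ¹-completion.**
Let `⋯ → C_{n+1} --d1--> C_n --d0--> C_{n-1} → ⋯` be (part of) a normed chain complex over
ℝ (normed abelian groups with bounded boundary operators), and let `C̄_*` denote its
degreewise completion, with the boundary operators extended continuously
(`Completion.map`).  Assume that the induced semi-norm on `H_n(C_*)` vanishes (every
`n`-cycle is homologous to cycles of arbitrarily small norm) and that `C_*` satisfies the
uniform boundary condition in degree `n` with constant `K`.  Then there is a constant
`K' > 0` such that every cycle `c ∈ C_n` admits a chain `b ∈ C̄_{n+1}` with `∂b = c` and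
`‖b‖ ≤ K'·‖c‖`.  In particular, the induced map `H_n(C_*) → H_n(C̄_*)` is zero. -/
theorem ubc_completion_filling
    {Cnp Cn Cnm : Type*}
    [NormedAddCommGroup Cnp] [NormedAddCommGroup Cn] [NormedAddCommGroup Cnm]
    (d1 : Cnp →+ Cn) (d0 : Cn →+ Cnm)
    (hd1 : ∃ L : ℝ, ∀ x, ‖d1 x‖ ≤ L * ‖x‖)
    (hd0 : ∃ L : ℝ, ∀ x, ‖d0 x‖ ≤ L * ‖x‖)
    (hcomplex : ∀ x, d0 (d1 x) = 0)
    -- the semi-norm induced on `H_n(C_*)` is identically zero: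
    (hseminorm : ∀ z : Cn, d0 z = 0 → ∀ ε : ℝ, 0 < ε →
      ∃ z' : Cn, d0 z' = 0 ∧ (z - z') ∈ Set.range d1 ∧ ‖z'‖ ≤ ε)
    -- `C_*` satisfies UBC in degree `n` with constant `K`:
    (K : ℝ) (hKpos : 0 < K)
    (hubc : ∀ z : Cn, z ∈ Set.range d1 → ∃ b : Cnp, d1 b = z ∧ ‖b‖ ≤ K * ‖z‖) :
    ∃ K' : ℝ, 0 < K' ∧
      ∀ c : Cn, d0 c = 0 →
        ∃ b : Completion Cnp,
          Completion.map d1 b = (c : Completion Cn) ∧ ‖b‖ ≤ K' * ‖c‖ := by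
  classical
  obtain ⟨L1, hL1⟩ := hd1
  have hd1cont : Continuous d1 := AddMonoidHomClass.continuous_of_bound d1 L1 hL1
  have hud1 : UniformContinuous d1 := AddMonoidHomClass.uniformContinuous_of_bound d1 L1 hL1
  set D : Completion Cnp →+ Completion Cn := d1.completion hd1cont with hD
  have hDcont : Continuous D := d1.continuous_completion hd1cont
  have hmap : ∀ x : Completion Cnp, Completion.map d1 x = D x := by
    intro x
    refine Completion.induction_on x ?_ ?_
    · exact isClosed_eq Completion.continuous_map hDcont
    · intro a
      rw [Completion.map_coe hud1, AddMonoidHom.completion_coe]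
  refine ⟨4 * K, by positivity, ?_⟩
  intro c hc0
  by_cases hc : c = 0
  · refine ⟨0, ?_, ?_⟩
    · rw [hmap, map_zero, hc, Completion.coe_zero]
    · simp [hc]
  have hcpos : (0:ℝ) < ‖c‖ := norm_pos_iff.mpr hc
  have exZ : ∃ Z : ℕ → Cn, Z 0 = c ∧ (∀ k, d0 (Z k) = 0) ∧
      (∀ k, (Z k - Z (k+1)) ∈ Set.range d1) ∧ (∀ k, ‖Z k‖ ≤ ‖c‖ * (1/2)^k) := by
    have step : ∀ k : ℕ, ∀ z : {z : Cn // d0 z = 0},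
        ∃ z' : {z : Cn // d0 z = 0}, ((z : Cn) - z') ∈ Set.range d1 ∧
          ‖(z' : Cn)‖ ≤ ‖c‖ * (1/2)^(k+1) := by
      intro k z
      obtain ⟨z', hz'0, hz'r, hz'n⟩ := hseminorm z.1 z.2
        (‖c‖ * (1/2)^(k+1)) (by positivity)
      exact ⟨⟨z', hz'0⟩, hz'r, hz'n⟩
    choose F hF1 hF2 using step
    let W : ℕ → {z : Cn // d0 z = 0} := fun k => Nat.rec ⟨c, hc0⟩ (fun k p => F k p) k
    have hzero : ‖(W 0).1‖ ≤ ‖c‖ * (1/2:ℝ)^0 := by rw [pow_zero, mul_one]; exact le_of_eq rfl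
    exact ⟨fun k => (W k).1, rfl, fun k => (W k).2, fun k => hF1 k (W k),
      fun k => Nat.casesOn (motive := fun k => ‖(W k).1‖ ≤ ‖c‖ * (1/2:ℝ)^k) k
        hzero (fun k => hF2 k (W k))⟩
  obtain ⟨Z, hZ0, hZcyc, hZrange, hZnorm⟩ := exZ
  -- fill each difference
  have exb : ∀ k, ∃ b : Cnp, d1 b = Z k - Z (k+1) ∧
      ‖b‖ ≤ K * (‖Z k‖ + ‖Z (k+1)‖) := by
    intro k
    obtain ⟨b, hb1, hb2⟩ := hubc _ (hZrange k)
    exact ⟨b, hb1, hb2.trans (by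
      have := norm_sub_le (Z k) (Z (k+1))
      nlinarith [norm_nonneg (Z k - Z (k+1))])⟩
  choose b hb1 hb2 using exb
  -- bound the norms of the fillings
  have hbound : ∀ k, ‖b k‖ ≤ (2 * K * ‖c‖) * (1/2)^k := by
    intro k
    have h2 : ‖Z (k+1)‖ ≤ ‖c‖ * (1/2:ℝ)^k :=
      (hZnorm (k+1)).trans (mul_le_mul_of_nonneg_left
        (pow_le_pow_of_le_one (by norm_num) (by norm_num) (Nat.le_succ k)) hcpos.le)
    calc ‖b k‖ ≤ K * (‖Z k‖ + ‖Z (k+1)‖) := hb2 k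
      _ ≤ K * (‖c‖ * (1/2)^k + ‖c‖ * (1/2)^k) :=
          mul_le_mul_of_nonneg_left (add_le_add (hZnorm k) h2) hKpos.le
      _ = (2 * K * ‖c‖) * (1/2)^k := by ring
  -- the series of fillings in the completion
  set a : ℕ → Completion Cnp := fun k => ((b k : Cnp) : Completion Cnp) with ha
  have hanorm : ∀ k, ‖a k‖ = ‖b k‖ := fun k => Completion.norm_coe _
  have hgeo : Summable (fun k : ℕ => (2 * K * ‖c‖) * (1/2:ℝ)^k) :=
    (summable_geometric_of_lt_one (by norm_num) (by norm_num)).mul_left _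
  have hsumnorm : Summable (fun k => ‖a k‖) := by
    refine hgeo.of_nonneg_of_le (fun k => norm_nonneg _) (fun k => ?_)
    rw [hanorm]; exact hbound k
  have hsum : Summable a := Summable.of_norm hsumnorm
  set B : Completion Cnp := ∑' k, a k with hB
  have hhas : HasSum a B := hsum.hasSum
  -- the image series telescopes to c
  have hDa : ∀ k, D (a k) = ((Z k : Cn) : Completion Cn) - ((Z (k+1) : Cn) : Completion Cn) := by
    intro k
    rw [ha]
    show D ((b k : Cnp) : Completion Cnp) = _
    rw [AddMonoidHom.completion_coe, hb1 k, Completion.coe_sub]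
  have hhasD : HasSum (fun k => D (a k)) (D B) := hhas.map D hDcont
  have htel : Filter.Tendsto (fun n => ∑ k ∈ Finset.range n, D (a k)) Filter.atTop
      (nhds ((c : Completion Cn))) := by
    have heq : ∀ n, ∑ k ∈ Finset.range n, D (a k)
        = ((Z 0 : Cn) : Completion Cn) - ((Z n : Cn) : Completion Cn) := by
      intro n
      simp only [hDa]
      exact Finset.sum_range_sub' (fun k => ((Z k : Cn) : Completion Cn)) n
    simp only [heq, hZ0]
    have hz0 : Filter.Tendsto (fun n => ((Z n : Cn) : Completion Cn)) Filter.atTop (nhds 0) := by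
      have hg : ∀ n : ℕ, ‖((Z n : Cn) : Completion Cn)‖ ≤ ‖c‖ * (1/2:ℝ)^n := by
        intro n; rw [Completion.norm_coe]; exact hZnorm n
      have h1 : Filter.Tendsto (fun n : ℕ => (1/2:ℝ)^n) Filter.atTop (nhds 0) :=
        tendsto_pow_atTop_nhds_zero_of_lt_one (by norm_num) (by norm_num)
      have h2 : Filter.Tendsto (fun n : ℕ => ‖c‖ * (1/2:ℝ)^n) Filter.atTop (nhds 0) := by
        have := h1.const_mul ‖c‖
        simpa using this
      exact squeeze_zero_norm hg h2
    have := (tendsto_const_nhds : Filter.Tendsto (fun _ : ℕ => (c : Completion Cn))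
      Filter.atTop (nhds (c : Completion Cn))).sub hz0
    simpa using this
  have hDB : D B = (c : Completion Cn) :=
    tendsto_nhds_unique hhasD.tendsto_sum_nat htel
  refine ⟨B, by rw [hmap]; exact hDB, ?_⟩
  have h1 : ‖B‖ ≤ ∑' k, ‖a k‖ := norm_tsum_le_tsum_norm hsumnorm
  have h2 : ∑' k, ‖a k‖ ≤ ∑' k, (2 * K * ‖c‖) * (1/2:ℝ)^k := by
    refine Summable.tsum_le_tsum (fun k => ?_) hsumnorm hgeo
    rw [hanorm]; exact hbound k
  have h3 : ∑' k, (2 * K * ‖c‖) * (1/2:ℝ)^k = 4 * K * ‖c‖ := by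
    rw [tsum_mul_left, tsum_geometric_two]; ring
  calc ‖B‖ ≤ ∑' k, ‖a k‖ := h1
    _ ≤ 4 * K * ‖c‖ := by rw [← h3]; exact h2
    _ = 4 * K * ‖c‖ := rfl
end

section
/- Let Γ be a finitely generated group with finite generating set S. Then Γ is amenable if and only if Γ admits a Følner sequence with respect to S, i.e., a sequence (F_k) of non-empty finite subsets of Γ with lim_{k→∞} |∂_S F_k|/|F_k| = 0, where ∂_S F = {γ ∈ F : ∃ s ∈ S, γ·s ∉ F}. -/
open scoped BigOperators

/-- A real-valued function on a set is bounded. -/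
def BddFun {Γ : Type*} (f : Γ → ℝ) : Prop := ∃ C : ℝ, ∀ x, |f x| ≤ C

/-- A group is amenable if it admits a left-invariant mean on `ℓ^∞(Γ;ℝ)`:
an ℝ-linear, normalised, positive functional on the bounded real-valued functions that is
invariant under the `Γ`-action induced by right translation. -/
def IsAmenable (Γ : Type*) [Group Γ] : Prop :=
  ∃ m : (Γ → ℝ) → ℝ,
    (∀ f g : Γ → ℝ, BddFun f → BddFun g → m (f + g) = m f + m g) ∧
    (∀ (c : ℝ) (f : Γ → ℝ), BddFun f → m (c • f) = c * m f) ∧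
    m (fun _ => 1) = 1 ∧
    (∀ f : Γ → ℝ, BddFun f → (∀ x, 0 ≤ f x) → 0 ≤ m f) ∧
    (∀ (γ : Γ) (f : Γ → ℝ), BddFun f → m (fun x => f (x * γ)) = m f)

open Filter
open scoped Pointwise

set_option linter.unusedSectionVars false

section Aux
variable {Γ : Type*} [Group Γ]

lemma bddFun_translate {f : Γ → ℝ} (γ : Γ) (hf : BddFun f) :
    BddFun (fun x => f (x * γ)) := by
  obtain ⟨C, hC⟩ := hf
  exact ⟨C, fun x => hC _⟩

/-- The boundary as a Finset. -/
def bset [DecidableEq Γ] (S : Finset Γ) (F : Finset Γ) : Finset Γ :=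
  F.filter (fun γ => ∃ s ∈ S, γ * s ∉ F)

lemma ncard_boundary [DecidableEq Γ] (S F : Finset Γ) :
    Set.ncard {γ : Γ | γ ∈ F ∧ ∃ s ∈ S, γ * s ∉ F} = (bset S F).card := by
  rw [← Set.ncard_coe_finset]
  congr 1
  ext γ
  simp [bset, Finset.mem_filter]

/-- Key counting estimate: translating a bounded function by a generator changes
the sum over `F` by at most `2 C |∂F|`. -/
lemma sum_translate_est [DecidableEq Γ] (S F : Finset Γ) {s : Γ} (hs : s ∈ S)
    {f : Γ → ℝ} {C : ℝ} (hC : ∀ x, |f x| ≤ C) :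
    |∑ γ ∈ F, f (γ * s) - ∑ γ ∈ F, f γ| ≤ 2 * C * (bset S F).card := by
  classical
  set F' : Finset Γ := F.image (· * s) with hF'
  have hinj : Function.Injective (· * s) := mul_left_injective s
  have h1 : ∑ γ ∈ F, f (γ * s) = ∑ x ∈ F', f x := by
    rw [hF', Finset.sum_image (fun x _ y _ h => hinj h)]
  have hcards : F'.card = F.card := Finset.card_image_of_injective _ hinj
  have hsub1 : F' \ F ⊆ (bset S F).image (· * s) := by
    intro x hx
    rw [Finset.mem_sdiff] at hx
    obtain ⟨hx1, hx2⟩ := hx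
    rw [hF', Finset.mem_image] at hx1
    obtain ⟨γ, hγ, rfl⟩ := hx1
    exact Finset.mem_image.2 ⟨γ, Finset.mem_filter.2 ⟨hγ, s, hs, hx2⟩, rfl⟩
  have hc1 : (F' \ F).card ≤ (bset S F).card := by
    calc (F' \ F).card ≤ ((bset S F).image (· * s)).card := Finset.card_le_card hsub1
    _ = (bset S F).card := Finset.card_image_of_injective _ hinj
  have hc2 : (F \ F').card ≤ (bset S F).card := by
    rw [Finset.card_sdiff_comm hcards.symm]
    exact hc1
  have habs : ∀ (G : Finset Γ), |∑ x ∈ G, f x| ≤ C * G.card := by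
    intro G
    calc |∑ x ∈ G, f x| ≤ ∑ x ∈ G, |f x| := Finset.abs_sum_le_sum_abs _ _
    _ ≤ ∑ _x ∈ G, C := Finset.sum_le_sum (fun x _ => hC x)
    _ = C * G.card := by rw [Finset.sum_const, nsmul_eq_mul, mul_comm]
  have hC0 : 0 ≤ C := le_trans (abs_nonneg _) (hC 1)
  have hsplit : ∑ x ∈ F', f x - ∑ x ∈ F, f x
      = ∑ x ∈ F' \ F, f x - ∑ x ∈ F \ F', f x := by
    have e1 : ∑ x ∈ F' \ (F ∩ F'), f x = ∑ x ∈ F', f x - ∑ x ∈ F ∩ F', f x :=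
      Finset.sum_sdiff_eq_sub (Finset.inter_subset_right)
    have e2 : ∑ x ∈ F \ (F ∩ F'), f x = ∑ x ∈ F, f x - ∑ x ∈ F ∩ F', f x :=
      Finset.sum_sdiff_eq_sub (Finset.inter_subset_left)
    have e3 : F' \ (F ∩ F') = F' \ F := by
      ext x; simp [Finset.mem_sdiff, Finset.mem_inter]
    have e4 : F \ (F ∩ F') = F \ F' := by
      ext x; simp [Finset.mem_sdiff, Finset.mem_inter]
    rw [← e3, ← e4, e1, e2]; ring
  rw [h1, hsplit]
  calc |∑ x ∈ F' \ F, f x - ∑ x ∈ F \ F', f x|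
      ≤ |∑ x ∈ F' \ F, f x| + |∑ x ∈ F \ F', f x| := abs_sub _ _
    _ ≤ C * (F' \ F).card + C * (F \ F').card := add_le_add (habs _) (habs _)
    _ ≤ C * (bset S F).card + C * (bset S F).card := by
        gcongr
    _ = 2 * C * (bset S F).card := by ring

end Aux

section Back
variable {Γ : Type*} [Group Γ] [DecidableEq Γ]

lemma folner_to_amenable (S : Finset Γ)
    (hgen : Subgroup.closure (S : Set Γ) = ⊤) (F : ℕ → Finset Γ)
    (hne : ∀ k, (F k).Nonempty)
    (hlim : Tendsto (fun k => ((bset S (F k)).card : ℝ) / (F k).card) atTop (nhds 0)) :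
    IsAmenable Γ := by
  obtain ⟨U, hU⟩ := Ultrafilter.exists_le (atTop : Filter ℕ)
  set avg : (Γ → ℝ) → ℕ → ℝ := fun f k => (∑ γ ∈ F k, f γ) / (F k).card with havg
  have hcard : ∀ k, (0:ℝ) < ((F k).card : ℝ) := fun k => by
    exact_mod_cast (hne k).card_pos
  have habs : ∀ (f : Γ → ℝ) (C : ℝ), (∀ x, |f x| ≤ C) → ∀ (G : Finset Γ),
      |∑ x ∈ G, f x| ≤ C * G.card := by
    intro f C hC G
    calc |∑ x ∈ G, f x| ≤ ∑ x ∈ G, |f x| := Finset.abs_sum_le_sum_abs _ _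
    _ ≤ ∑ _x ∈ G, C := Finset.sum_le_sum (fun x _ => hC x)
    _ = C * G.card := by rw [Finset.sum_const, nsmul_eq_mul, mul_comm]
  have hex : ∀ f : Γ → ℝ, BddFun f → ∃ L, Tendsto (avg f) (U : Filter ℕ) (nhds L) := by
    rintro f ⟨C, hC⟩
    have hmem : ∀ k, avg f k ∈ Set.Icc (-C) C := by
      intro k
      have h1 : |avg f k| ≤ C := by
        rw [havg]
        rw [abs_div, abs_of_pos (hcard k), div_le_iff₀ (hcard k)]
        exact habs f C hC (F k)
      rw [abs_le] at h1
      exact ⟨h1.1, h1.2⟩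
    obtain ⟨L, _, hL⟩ := isCompact_Icc.ultrafilter_le_nhds (U.map (avg f))
      (by
        rw [Ultrafilter.coe_map, Filter.le_principal_iff]
        exact Filter.mem_map.2 (Filter.univ_mem' hmem))
    refine ⟨L, ?_⟩
    rwa [Filter.Tendsto, ← Ultrafilter.coe_map]
  set m : (Γ → ℝ) → ℝ := fun f => limUnder (U : Filter ℕ) (avg f) with hm
  have hspec : ∀ f : Γ → ℝ, BddFun f → Tendsto (avg f) (U : Filter ℕ) (nhds (m f)) := by
    intro f hf
    obtain ⟨L, hL⟩ := hex f hf
    rw [show m f = L from hL.limUnder_eq]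
    exact hL
  -- additivity
  have hadd : ∀ f g : Γ → ℝ, BddFun f → BddFun g → m (f + g) = m f + m g := by
    intro f g hf hg
    have h1 : avg (f + g) = fun k => avg f k + avg g k := by
      funext k
      rw [havg]
      simp only [Pi.add_apply, Finset.sum_add_distrib, add_div]
    have h2 : Tendsto (avg (f + g)) (U : Filter ℕ) (nhds (m f + m g)) := by
      rw [h1]; exact (hspec f hf).add (hspec g hg)
    exact h2.limUnder_eq
  -- smul
  have hsmul : ∀ (c : ℝ) (f : Γ → ℝ), BddFun f → m (c • f) = c * m f := by
    intro c f hf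
    have h1 : avg (c • f) = fun k => c * avg f k := by
      funext k
      rw [havg]
      simp only [Pi.smul_apply, smul_eq_mul, ← Finset.mul_sum, mul_div_assoc]
    have h2 : Tendsto (avg (c • f)) (U : Filter ℕ) (nhds (c * m f)) := by
      rw [h1]; exact (hspec f hf).const_mul c
    exact h2.limUnder_eq
  -- normalization
  have hone : m (fun _ => 1) = 1 := by
    have h1 : avg (fun _ => 1) = fun _ => (1:ℝ) := by
      funext k
      rw [havg]
      simp only [Finset.sum_const, nsmul_eq_mul, mul_one]
      exact div_self (ne_of_gt (hcard k))
    have h2 : Tendsto (avg (fun _ => 1)) (U : Filter ℕ) (nhds 1) := by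
      rw [h1]; exact tendsto_const_nhds
    exact h2.limUnder_eq
  -- positivity
  have hpos : ∀ f : Γ → ℝ, BddFun f → (∀ x, 0 ≤ f x) → 0 ≤ m f := by
    intro f hf hf0
    refine ge_of_tendsto' (hspec f hf) (fun k => ?_)
    exact div_nonneg (Finset.sum_nonneg (fun x _ => hf0 x)) (le_of_lt (hcard k))
  -- invariance for generators
  have hinvS : ∀ s ∈ S, ∀ f : Γ → ℝ, BddFun f → m (fun x => f (x * s)) = m f := by
    intro s hs f hf
    obtain ⟨C, hC⟩ := hf
    have hC0 : 0 ≤ C := le_trans (abs_nonneg _) (hC 1)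
    have key : Tendsto (fun k => avg (fun x => f (x * s)) k - avg f k) atTop (nhds 0) := by
      apply squeeze_zero_norm
        (a := fun k => 2 * C * (((bset S (F k)).card : ℝ) / (F k).card))
      · intro k
        have h1 : avg (fun x => f (x * s)) k - avg f k
            = (∑ γ ∈ F k, f (γ * s) - ∑ γ ∈ F k, f γ) / (F k).card := by
          rw [havg]; rw [div_sub_div_same]
        rw [Real.norm_eq_abs, h1, abs_div, abs_of_pos (hcard k),
          div_le_iff₀ (hcard k)]
        calc |∑ γ ∈ F k, f (γ * s) - ∑ γ ∈ F k, f γ|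
            ≤ 2 * C * (bset S (F k)).card := sum_translate_est S (F k) hs hC
          _ = 2 * C * (((bset S (F k)).card : ℝ) / (F k).card) * (F k).card := by
              field_simp
      · have := hlim.const_mul (2 * C)
        simpa using this
    have h1 : Tendsto (fun k => (avg (fun x => f (x * s)) k - avg f k) + avg f k)
        (U : Filter ℕ) (nhds (0 + m f)) := (key.mono_left hU).add (hspec f ⟨C, hC⟩)
    have h2 : Tendsto (avg (fun x => f (x * s))) (U : Filter ℕ) (nhds (m f)) := by
      simpa using h1
    exact h2.limUnder_eq
  -- invariance for all elements via the generating set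
  have hinv : ∀ (γ : Γ) (f : Γ → ℝ), BddFun f → m (fun x => f (x * γ)) = m f := by
    have hmem : ∀ γ : Γ, γ ∈ Subgroup.closure (S : Set Γ) := by
      intro γ; rw [hgen]; exact Subgroup.mem_top γ
    intro γ
    refine Subgroup.closure_induction (p := fun γ _ =>
        ∀ f : Γ → ℝ, BddFun f → m (fun x => f (x * γ)) = m f)
      ?_ ?_ ?_ ?_ (hmem γ)
    · intro s hs
      exact hinvS s hs
    · intro f _
      simp only [mul_one]
    · intro a b _ _ pa pb f hf
      have h1 : (fun x => f (x * (a * b))) = (fun x => (fun y => f (y * b)) (x * a)) := by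
        funext x; simp [mul_assoc]
      rw [h1, pa _ (bddFun_translate b hf), pb f hf]
    · intro a _ pa f hf
      have h1 := pa (fun y => f (y * a⁻¹)) (bddFun_translate a⁻¹ hf)
      have h2 : (fun x => (fun y => f (y * a⁻¹)) (x * a)) = f := by
        funext x; simp [mul_assoc]
      rw [h2] at h1
      exact h1.symm
  exact ⟨m, hadd, hsmul, hone, hpos, hinv⟩

end Back

section Forward
variable {Γ : Type*} [Group Γ]

lemma bddFun_sum {ι : Type*} (T : Finset ι) (h : ι → Γ → ℝ) (hb : ∀ j ∈ T, BddFun (h j)) :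
    BddFun (fun x => ∑ j ∈ T, h j x) := by
  classical
  induction T using Finset.cons_induction with
  | empty => exact ⟨0, by simp⟩
  | cons a T ha ih =>
    obtain ⟨C, hC⟩ := hb a (Finset.mem_cons_self a T)
    obtain ⟨D, hD⟩ := ih (fun j hj => hb j (Finset.mem_cons.2 (Or.inr hj)))
    refine ⟨C + D, fun x => ?_⟩
    simp only [Finset.sum_cons]
    exact le_trans (abs_add_le _ _) (add_le_add (hC x) (hD x))

lemma m_sum {ι : Type*} (m : (Γ → ℝ) → ℝ)
    (hadd : ∀ f g : Γ → ℝ, BddFun f → BddFun g → m (f + g) = m f + m g)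
    (hzero : m (fun _ => 0) = 0)
    (T : Finset ι) (h : ι → Γ → ℝ) (hb : ∀ j ∈ T, BddFun (h j)) :
    m (fun x => ∑ j ∈ T, h j x) = ∑ j ∈ T, m (h j) := by
  classical
  induction T using Finset.cons_induction with
  | empty => simpa using hzero
  | cons a T ha ih =>
    have h1 : (fun x => ∑ j ∈ Finset.cons a T ha, h j x)
        = h a + (fun x => ∑ j ∈ T, h j x) := by
      funext x; rw [Finset.sum_cons, Pi.add_apply]
    have hbT : ∀ j ∈ T, BddFun (h j) := fun j hj => hb j (Finset.mem_cons.2 (Or.inr hj))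
    rw [h1, hadd _ _ (hb a (Finset.mem_cons_self a T)) (bddFun_sum T h hbT),
      Finset.sum_cons, ih hbT]

lemma growth_one [DecidableEq Γ] (S : Finset Γ) {ε : ℝ} (hS : S.Nonempty)
    (hb : ∀ G : Finset Γ, G.Nonempty → ε * G.card ≤ ((bset S G).card : ℝ)) :
    ∀ G : Finset Γ, G.Nonempty →
      (1 + ε / S.card) * G.card ≤ (((G * (insert 1 S)).card : ℕ) : ℝ) := by
  intro G hG
  set K₀ : Finset Γ := insert 1 S with hK₀
  have hsub : G ⊆ G * K₀ := Finset.subset_mul_left G (Finset.mem_insert_self 1 S)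
  have hbiUnion : bset S G ⊆ S.biUnion (fun s => G.filter (fun γ => γ * s ∉ G)) := by
    intro γ hγ
    rw [bset, Finset.mem_filter] at hγ
    obtain ⟨hγG, s, hs, hγs⟩ := hγ
    exact Finset.mem_biUnion.2 ⟨s, hs, Finset.mem_filter.2 ⟨hγG, hγs⟩⟩
  have hpiece : ∀ s ∈ S, (G.filter (fun γ => γ * s ∉ G)).card ≤ (G * K₀).card - G.card := by
    intro s hs
    have hinj : Function.Injective (· * s) := mul_left_injective s
    have him : (G.filter (fun γ => γ * s ∉ G)).image (· * s) ⊆ (G * K₀) \ G := by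
      intro x hx
      rw [Finset.mem_image] at hx
      obtain ⟨γ, hγ, rfl⟩ := hx
      rw [Finset.mem_filter] at hγ
      refine Finset.mem_sdiff.2 ⟨?_, hγ.2⟩
      exact Finset.mul_mem_mul hγ.1 (Finset.mem_insert.2 (Or.inr hs))
    calc (G.filter (fun γ => γ * s ∉ G)).card
        = ((G.filter (fun γ => γ * s ∉ G)).image (· * s)).card :=
          (Finset.card_image_of_injective _ hinj).symm
      _ ≤ ((G * K₀) \ G).card := Finset.card_le_card him
      _ = (G * K₀).card - G.card := Finset.card_sdiff_of_subset hsub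
  have hkey : ((bset S G).card : ℝ) ≤ (S.card : ℝ) * (((G * K₀).card : ℝ) - G.card) := by
    have h1 : (bset S G).card ≤ ∑ s ∈ S, (G.filter (fun γ => γ * s ∉ G)).card :=
      le_trans (Finset.card_le_card hbiUnion) (Finset.card_biUnion_le)
    have h2 : ∑ s ∈ S, (G.filter (fun γ => γ * s ∉ G)).card
        ≤ ∑ _s ∈ S, ((G * K₀).card - G.card) := Finset.sum_le_sum hpiece
    have h3 : (bset S G).card ≤ S.card * ((G * K₀).card - G.card) := by
      calc (bset S G).card ≤ ∑ _s ∈ S, ((G * K₀).card - G.card) := le_trans h1 h2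
        _ = S.card * ((G * K₀).card - G.card) := by rw [Finset.sum_const, smul_eq_mul]
    have h4 : ((G * K₀).card - G.card : ℕ) = (((G * K₀).card : ℝ) - G.card : ℝ) := by
      rw [Nat.cast_sub (Finset.card_le_card hsub)]
    calc ((bset S G).card : ℝ) ≤ ((S.card * ((G * K₀).card - G.card) : ℕ) : ℝ) := by
          exact_mod_cast h3
      _ = (S.card : ℝ) * (((G * K₀).card : ℝ) - G.card) := by
          rw [Nat.cast_mul, h4]
  have hS0 : (0:ℝ) < S.card := by exact_mod_cast hS.card_pos
  have hεG := le_trans (hb G hG) hkey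
  have h2 : ε / S.card * G.card ≤ ((G * K₀).card : ℝ) - G.card := by
    rw [div_mul_eq_mul_div, div_le_iff₀ hS0]
    linarith
  linarith

lemma growth_pow [DecidableEq Γ] (S : Finset Γ) {ε : ℝ} (hε : 0 < ε) (hS : S.Nonempty)
    (hb : ∀ G : Finset Γ, G.Nonempty → ε * G.card ≤ ((bset S G).card : ℝ)) :
    ∀ (n : ℕ) (G : Finset Γ), G.Nonempty →
      (1 + ε / S.card) ^ n * G.card ≤ (((G * (insert 1 S) ^ n).card : ℕ) : ℝ) := by
  intro n
  induction n with
  | zero => intro G hG; simp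
  | succ n ih =>
    intro G hG
    have hδ : (0:ℝ) < 1 + ε / S.card := by
      have hS0 : (0:ℝ) < S.card := by exact_mod_cast hS.card_pos
      positivity
    have hGK : (G * insert 1 S).Nonempty :=
      Finset.mul_nonempty.2 ⟨hG, ⟨1, Finset.mem_insert_self 1 S⟩⟩
    have step := growth_one S hS hb G hG
    have ihstep := ih (G * insert 1 S) hGK
    calc (1 + ε / S.card) ^ (n + 1) * G.card
        = (1 + ε / S.card) ^ n * ((1 + ε / S.card) * G.card) := by ring
      _ ≤ (1 + ε / S.card) ^ n * ((G * insert 1 S).card : ℝ) := by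
          have := pow_nonneg (le_of_lt hδ) n
          gcongr
      _ ≤ (((G * insert 1 S) * (insert 1 S) ^ n).card : ℝ) := ihstep
      _ = ((G * (insert 1 S) ^ (n + 1)).card : ℝ) := by
          rw [mul_assoc, ← pow_succ']

lemma no_folner_not_amenable [DecidableEq Γ] (S : Finset Γ) {ε : ℝ} (hε : 0 < ε)
    (hb : ∀ G : Finset Γ, G.Nonempty → ε * G.card ≤ ((bset S G).card : ℝ))
    (ham : IsAmenable Γ) : False := by
  obtain ⟨m, hadd, hsmul, hone, hpos, hinv⟩ := ham
  -- S is nonempty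
  have hS : S.Nonempty := by
    rcases S.eq_empty_or_nonempty with rfl | h
    · have h1 := hb {1} ⟨1, Finset.mem_singleton_self 1⟩
      simp [bset] at h1
      linarith
    · exact h
  have hS0 : (0:ℝ) < S.card := by exact_mod_cast hS.card_pos
  set δ : ℝ := ε / S.card with hδdef
  have hδ : 0 < δ := div_pos hε hS0
  -- choose n with (1+δ)^n ≥ 2
  obtain ⟨n, hn⟩ := exists_nat_ge (1 / δ)
  have h2n : (2:ℝ) ≤ (1 + δ) ^ n := by
    have h1 : (1:ℝ) ≤ n * δ := by
      have h := mul_le_mul_of_nonneg_right hn (le_of_lt hδ)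
      rwa [one_div_mul_cancel (ne_of_gt hδ)] at h
    calc (2:ℝ) = 1 + 1 := by norm_num
      _ ≤ 1 + n * δ := by linarith
      _ ≤ (1 + δ) ^ n := one_add_mul_le_pow (by linarith) n
  set K : Finset Γ := (insert 1 S) ^ n with hKdef
  have hK2 : ∀ G : Finset Γ, 2 * (G.card : ℝ) ≤ ((G * K).card : ℝ) := by
    intro G
    rcases G.eq_empty_or_nonempty with rfl | hG
    · simp
    · have hstep := growth_pow S hε hS hb n G hG
      have h2 : 2 * (G.card : ℝ) ≤ (1 + δ) ^ n * G.card :=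
        mul_le_mul_of_nonneg_right h2n (Nat.cast_nonneg _)
      exact le_trans h2 hstep
  -- Hall's marriage theorem
  set t : Γ × Bool → Finset Γ := fun p => K.image (p.1 * ·) with htdef
  have hall : ∀ s : Finset (Γ × Bool), s.card ≤ (s.biUnion t).card := by
    intro s
    set G : Finset Γ := s.image Prod.fst with hGdef
    have h1 : s.card ≤ 2 * G.card := by
      have hsub : s ⊆ G ×ˢ (Finset.univ : Finset Bool) := by
        intro p hp
        exact Finset.mem_product.2 ⟨Finset.mem_image_of_mem Prod.fst hp, Finset.mem_univ _⟩
      calc s.card ≤ (G ×ˢ (Finset.univ : Finset Bool)).card := Finset.card_le_card hsub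
        _ = G.card * 2 := by rw [Finset.card_product, Finset.card_univ, Fintype.card_bool]
        _ = 2 * G.card := by ring
    have h2 : G * K ⊆ s.biUnion t := by
      intro x hx
      rw [Finset.mem_mul] at hx
      obtain ⟨y, hy, z, hz, rfl⟩ := hx
      rw [hGdef, Finset.mem_image] at hy
      obtain ⟨p, hp, rfl⟩ := hy
      exact Finset.mem_biUnion.2 ⟨p, hp, Finset.mem_image.2 ⟨z, hz, rfl⟩⟩
    have h3 : (s.card : ℝ) ≤ ((s.biUnion t).card : ℝ) := by
      calc (s.card : ℝ) ≤ 2 * G.card := by exact_mod_cast h1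
        _ ≤ ((G * K).card : ℝ) := hK2 G
        _ ≤ ((s.biUnion t).card : ℝ) := by exact_mod_cast Finset.card_le_card h2
    exact_mod_cast h3
  obtain ⟨f, hfinj, hft⟩ := (Finset.all_card_le_biUnion_card_iff_exists_injective t).1 hall
  -- the partition functions
  set g : Γ × Bool → Γ := fun p => p.1⁻¹ * f p with hgdef
  have hgK : ∀ p, g p ∈ K := by
    intro p
    have := hft p
    rw [htdef, Finset.mem_image] at this
    obtain ⟨k, hk, hkeq⟩ := this
    have : g p = k := by rw [hgdef]; simp [← hkeq]
    rwa [this]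
  set P : Bool → Γ → Γ → ℝ := fun i g0 x => if g (x, i) = g0 then 1 else 0 with hPdef
  have hPbdd : ∀ i g0, BddFun (P i g0) := by
    intro i g0
    refine ⟨1, fun x => ?_⟩
    rw [hPdef]
    dsimp only
    split <;> simp
  have hsumP : ∀ i x, ∑ g0 ∈ K, P i g0 x = 1 := by
    intro i x
    rw [hPdef]
    dsimp only
    rw [Finset.sum_ite_eq K (g (x, i)) (fun _ => 1)]
    simp [hgK (x, i)]
  set Q : Bool → Γ → Γ → ℝ := fun i g0 x => P i g0 (x * g0⁻¹) with hQdef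
  have hQbdd : ∀ i g0, BddFun (Q i g0) := by
    intro i g0
    obtain ⟨C, hC⟩ := hPbdd i g0
    exact ⟨C, fun x => hC _⟩
  have hmQ : ∀ i g0, m (Q i g0) = m (P i g0) := by
    intro i g0
    exact hinv g0⁻¹ (P i g0) (hPbdd i g0)
  have hzero : m (fun _ => 0) = 0 := by
    have heq : ((0:ℝ) • (fun _ : Γ => (1:ℝ))) = (fun _ : Γ => (0:ℝ)) := by
      funext x; simp
    have h := hsmul 0 (fun _ => (1:ℝ)) ⟨1, by norm_num⟩
    rw [heq, zero_mul] at h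
    exact h
  -- H = sum of all translated indicators
  set H : Γ → ℝ := fun x => ∑ i ∈ (Finset.univ : Finset Bool), ∑ g0 ∈ K, Q i g0 x with hHdef
  -- m H = 2
  have hmH : m H = 2 := by
    have hin : ∀ i : Bool, m (fun x => ∑ g0 ∈ K, Q i g0 x) = 1 := by
      intro i
      rw [m_sum m hadd hzero K (Q i) (fun j _ => hQbdd i j)]
      have he : ∀ g0 ∈ K, m (Q i g0) = m (P i g0) := fun g0 _ => hmQ i g0
      rw [Finset.sum_congr rfl he, ← m_sum m hadd hzero K (P i) (fun j _ => hPbdd i j)]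
      have he2 : (fun x => ∑ g0 ∈ K, P i g0 x) = (fun _ : Γ => (1:ℝ)) := by
        funext x; exact hsumP i x
      rw [he2, hone]
    have hH2 : H = (fun x => ∑ g0 ∈ K, Q false g0 x) + (fun x => ∑ g0 ∈ K, Q true g0 x) := by
      funext x
      rw [hHdef]
      simp [Fintype.sum_bool]
      ring
    rw [hH2, hadd _ _ (bddFun_sum K (Q false) (fun j _ => hQbdd false j))
      (bddFun_sum K (Q true) (fun j _ => hQbdd true j)), hin false, hin true]
    norm_num
  -- H ≤ 1 pointwise
  have hHle : ∀ x, H x ≤ 1 := by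
    intro x
    have hform : H x = ∑ q ∈ (Finset.univ : Finset Bool) ×ˢ K, Q q.1 q.2 x := by
      rw [hHdef, Finset.sum_product]
    rw [hform]
    by_cases hex : ∃ q ∈ (Finset.univ : Finset Bool) ×ˢ K, Q q.1 q.2 x = 1
    · obtain ⟨q0, hq0, hq0v⟩ := hex
      have huniq : ∀ q ∈ (Finset.univ : Finset Bool) ×ˢ K, q ≠ q0 → Q q.1 q.2 x = 0 := by
        intro q hq hqne
        by_contra hqv
        have hq1 : g (x * q.2⁻¹, q.1) = q.2 := by
          by_contra hc
          apply hqv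
          rw [hQdef, hPdef]
          dsimp only
          rw [if_neg hc]
        have hq01 : g (x * q0.2⁻¹, q0.1) = q0.2 := by
          by_contra hc
          rw [hQdef, hPdef] at hq0v
          dsimp only at hq0v
          rw [if_neg hc] at hq0v
          norm_num at hq0v
        have hf1 : f (x * q.2⁻¹, q.1) = x := by
          have h2 := hq1
          rw [hgdef] at h2
          dsimp only at h2
          rw [inv_mul_eq_iff_eq_mul] at h2
          rw [h2, inv_mul_cancel_right]
        have hf01 : f (x * q0.2⁻¹, q0.1) = x := by
          have h2 := hq01
          rw [hgdef] at h2
          dsimp only at h2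
          rw [inv_mul_eq_iff_eq_mul] at h2
          rw [h2, inv_mul_cancel_right]
        have heq := hfinj (hf1.trans hf01.symm)
        apply hqne
        have heq1 : x * q.2⁻¹ = x * q0.2⁻¹ := congrArg Prod.fst heq
        have heq2 : q.1 = q0.1 := congrArg Prod.snd heq
        have heq3 : q.2 = q0.2 := by
          have := mul_left_cancel heq1
          exact inv_injective this
        exact Prod.ext heq2 heq3
      rw [Finset.sum_eq_single_of_mem q0 hq0 huniq, hq0v]
    · push_neg at hex
      have hz : ∀ q ∈ (Finset.univ : Finset Bool) ×ˢ K, Q q.1 q.2 x = 0 := by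
        intro q hq
        have h1 := hex q hq
        rw [hQdef, hPdef]
        dsimp only
        rw [hQdef, hPdef] at h1
        dsimp only at h1
        split
        · exfalso; apply h1; rw [if_pos ‹_›]
        · rfl
      rw [Finset.sum_eq_zero hz]
      norm_num
  -- bounded H
  have hHbdd : BddFun H := by
    rw [hHdef]
    apply bddFun_sum
    intro i _
    exact bddFun_sum K (Q i) (fun j _ => hQbdd i j)
  -- contradiction
  have hG : BddFun (fun x => 1 - H x) := by
    obtain ⟨C, hC⟩ := hHbdd
    refine ⟨1 + C, fun x => ?_⟩
    calc |1 - H x| ≤ |(1:ℝ)| + |H x| := abs_sub _ _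
      _ ≤ 1 + C := by
          have := hC x
          rw [abs_one]
          linarith
  have hsum1 : H + (fun x => 1 - H x) = (fun _ : Γ => (1:ℝ)) := by
    funext x; simp
  have h1 : (1:ℝ) = m H + m (fun x => 1 - H x) := by
    rw [← hadd H _ hHbdd hG, hsum1, hone]
  have h2 : 0 ≤ m (fun x => 1 - H x) := by
    apply hpos _ hG
    intro x
    linarith [hHle x]
  rw [hmH] at h1
  linarith

end Forward

/-- **Følner characterisation of amenability.**
Let `Γ` be a finitely generated group with finite generating set `S`.  Then `Γ` is
amenable if and only if `Γ` admits a Følner sequence with respect to `S`: a sequence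
`(F_k)` of non-empty finite subsets of `Γ` with `|∂_S F_k|/|F_k| → 0`, where
`∂_S F = {γ ∈ F : ∃ s ∈ S, γ·s ∉ F}`. -/
theorem amenable_iff_folner
    {Γ : Type*} [Group Γ] (S : Finset Γ)
    (hgen : Subgroup.closure (S : Set Γ) = ⊤) :
    IsAmenable Γ ↔
      ∃ F : ℕ → Finset Γ,
        (∀ k, (F k).Nonempty) ∧
        Filter.Tendsto
          (fun k => (Set.ncard {γ : Γ | γ ∈ F k ∧ ∃ s ∈ S, γ * s ∉ F k} : ℝ) / (F k).card)
          Filter.atTop (nhds 0) := by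
  classical
  constructor
  · intro ham
    by_contra hno
    have hεex : ∃ ε : ℝ, 0 < ε ∧
        ∀ G : Finset Γ, G.Nonempty → ε * G.card ≤ ((bset S G).card : ℝ) := by
      by_contra h2
      push_neg at h2
      have hch : ∀ k : ℕ, ∃ G : Finset Γ, G.Nonempty ∧
          ((bset S G).card : ℝ) < (1/(k+1)) * G.card := by
        intro k
        obtain ⟨G, hG1, hG2⟩ := h2 (1/(k+1)) (by positivity)
        exact ⟨G, hG1, hG2⟩
      choose G hG1 hG2 using hch
      apply hno
      refine ⟨G, hG1, ?_⟩
      have hconv : Tendsto (fun k : ℕ => ((bset S (G k)).card : ℝ) / (G k).card)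
          atTop (nhds 0) := by
        apply tendsto_of_tendsto_of_tendsto_of_le_of_le (g := fun _ => (0:ℝ))
          (h := fun k : ℕ => 1/((k:ℝ)+1)) tendsto_const_nhds
          tendsto_one_div_add_atTop_nhds_zero_nat
        · intro k
          positivity
        · intro k
          have hc : (0:ℝ) < (G k).card := by exact_mod_cast (hG1 k).card_pos
          rw [div_le_iff₀ hc]
          have := le_of_lt (hG2 k)
          linarith [this]
      simpa only [ncard_boundary] using hconv
    obtain ⟨ε, hε, hb⟩ := hεex
    exact (no_folner_not_amenable S hε hb ham).elim
  · rintro ⟨F, hne, hlim⟩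
    refine folner_to_amenable S hgen F hne ?_
    simpa only [ncard_boundary] using hlim
end

section
/- Let C_* be a normed ℝ-chain complex satisfying the uniform boundary condition in degree n−1 with constant K'. Then every cycle c in the ℓ¹-completion C̄_n can be written as an ℓ¹-convergent sum c = Σ_{k=0}^∞ c_k of cycles c_k ∈ C_n with Σ_k |c_k| < ∞. -/
/-!
Approximate a cycle `c` of the completion by chains `a k`. Their boundaries `d (a k)` tend to
the extended boundary of `c`, which is `0`, so the uniform boundary condition gives fillings
`b k` that tend to `0` as well, and the cycles `a k - b k` still converge to `c`. A point in the
closure of a subgroup of a complete normed group is the sum of a telescoping series of elements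
of the subgroup whose norms decay geometrically.
-/

open UniformSpace Filter Topology

section Completion

variable {E F : Type*} [SeminormedAddCommGroup E] [SeminormedAddCommGroup F]

noncomputable def cyclesToCompletion (d : E →+ F) : d.ker →+ Completion E :=
  Completion.toCompl.comp d.ker.subtype

@[simp]
theorem cyclesToCompletion_apply (d : E →+ F) (z : d.ker) :
    cyclesToCompletion d z = ((z : E) : Completion E) :=
  rfl

theorem mem_closure_range_cycles_of_completion_map_eq_zero (d : E →+ F)
    (hd : UniformContinuous d) {K : ℝ}
    (hubc : ∀ z ∈ Set.range d, ∃ b : E, d b = z ∧ ‖b‖ ≤ K * ‖z‖)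
    {c : Completion E} (hc : Completion.map d c = 0) :
    c ∈ closure ((cyclesToCompletion d).range : Set (Completion E)) := by
  obtain ⟨x, hx, ha⟩ := mem_closure_iff_seq_limit.mp (Completion.denseRange_coe (α := E) c)
  choose a hax using hx
  obtain rfl : (fun k => (a k : Completion E)) = x := funext hax
  have hda : Tendsto (fun k => ‖d (a k)‖) atTop (𝓝 0) := by
    have : Tendsto (fun k => Completion.map d (a k : Completion E)) atTop
        (𝓝 (Completion.map d c)) :=
      ((Completion.continuous_map (f := (d : E → F))).tendsto c).comp ha
    simpa [Function.comp_def, Completion.map_coe hd, hc] using this.norm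
  choose b hdb hb using fun k => hubc (d (a k)) ⟨a k, rfl⟩
  have hb0 : Tendsto (fun k => (b k : Completion E)) atTop (𝓝 0) := by
    refine squeeze_zero_norm (fun k => ?_) (by simpa using hda.const_mul K)
    simpa [Completion.norm_coe] using hb k
  refine mem_closure_of_tendsto (by simpa using ha.sub hb0) (Eventually.of_forall fun k => ?_)
  exact ⟨⟨a k - b k, by simp [AddMonoidHom.mem_ker, hdb]⟩, by simp [Completion.coe_sub]⟩

end Completion

theorem exists_hasSum_of_mem_closure_range {E F : Type*} [SeminormedAddCommGroup E]
    [NormedAddCommGroup F] [CompleteSpace F] {j : E →+ F} {x : F}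
    (hx : x ∈ closure (j.range : Set F)) :
    ∃ a : ℕ → E, Summable (fun k => ‖j (a k)‖) ∧ HasSum (fun k => j (a k)) x := by
  obtain ⟨a, hsum, -, ha⟩ := controlled_sum_of_mem_closure_range hx
    (fun n => pow_pos (by norm_num : (0 : ℝ) < 1 / 2) n)
  have hnorm : Summable (fun k => ‖j (a k)‖) := by
    rw [← summable_nat_add_iff 1]
    exact summable_geometric_two.comp_injective (add_left_injective 1) |>.of_nonneg_of_le
      (fun _ => norm_nonneg _) fun k => (ha (k + 1) k.succ_pos).le
  exact ⟨a, hnorm, (hasSum_iff_tendsto_nat_of_summable_norm hnorm).mpr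
    ((tendsto_add_atTop_iff_nat 1).mp hsum)⟩

theorem l1_cycles_decompose_into_cycles_general
    {Cn Cm : Type*} [NormedAddCommGroup Cn] [NormedSpace ℝ Cn]
    [NormedAddCommGroup Cm] [NormedSpace ℝ Cm]
    (d : Cn →L[ℝ] Cm)
    (K' : ℝ)
    (hubc : ∀ z ∈ Set.range d, ∃ b : Cn, d b = z ∧ ‖b‖ ≤ K' * ‖z‖) :
    ∀ c : Completion Cn, Completion.map d c = 0 →
      ∃ f : ℕ → Cn,
        (∀ k, d (f k) = 0) ∧
        Summable (fun k => ‖f k‖) ∧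
        HasSum (fun k => ((f k : Cn) : Completion Cn)) c := by
  intro c hc
  obtain ⟨a, hnorm, hsum⟩ := exists_hasSum_of_mem_closure_range
    (mem_closure_range_cycles_of_completion_map_eq_zero (d : Cn →+ Cm) d.uniformContinuous
      hubc hc)
  exact ⟨fun k => a k, fun k => (a k).2, by simpa [Completion.norm_coe] using hnorm,
    by simpa using hsum⟩

/-- **Decomposition of ℓ¹-cycles into ordinary cycles.**
Let `C_n --d--> C_{n-1}` be (part of) a normed ℝ-chain complex, satisfying the uniform
boundary condition in degree `n−1` with constant `K'` (every null-homologous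
`(n−1)`-cycle `z`, i.e. every `z` in the range of `d`, admits `b ∈ C_n` with `d b = z` and
`‖b‖ ≤ K'·‖z‖`).  Then every cycle `c` in the ℓ¹-completion `C̄_n` (i.e. every `c` killed
by the continuously extended boundary operator) can be written as an ℓ¹-convergent sum
`c = Σ_{k} c_k` of cycles `c_k ∈ C_n` with `Σ_k ‖c_k‖ < ∞`. -/
theorem l1_cycles_decompose_into_cycles
    {Cn Cm : Type*} [NormedAddCommGroup Cn] [NormedSpace ℝ Cn]
    [NormedAddCommGroup Cm] [NormedSpace ℝ Cm]
    (d : Cn →L[ℝ] Cm)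
    (K' : ℝ) (hK' : 0 < K')
    (hubc : ∀ z ∈ Set.range d, ∃ b : Cn, d b = z ∧ ‖b‖ ≤ K' * ‖z‖) :
    ∀ c : Completion Cn, Completion.map d c = 0 →
      ∃ f : ℕ → Cn,
        (∀ k, d (f k) = 0) ∧
        Summable (fun k => ‖f k‖) ∧
        HasSum (fun k => ((f k : Cn) : Completion Cn)) c :=
  l1_cycles_decompose_into_cycles_general d K' hubc
end
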